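/- For any system R for m agents and any agent i: (a) if agent i does not learn in R, then agent i does not learn' in R; (b) if R is synchronous, or if agent i has perfect recall in R, then agent i does not learn in R if and only if agent i does not learn' in R. -/

import Mathlib

namespace HalpernVardiMeyden

open scoped Classical

/-- A global state for `m` agents: an environment state together with a
local state for each agent. -/
abbrev GRun (L : Type) (m : ℕ) : Type := ℕ → L × (Fin m → L)

/-- The points `(r,n)` and `(r',n')` are indistinguishable to agent `i`. -/
def locEq {L : Type} {m : ℕ} (i : Fin m) (r : GRun L m) (n : ℕ)
    (r' : GRun L m) (n' : ℕ) : Prop :=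
  (r n).2 i = (r' n').2 i

/-- The system `R` is synchronous. -/
def SyncSys {L : Type} {m : ℕ} (R : Set (GRun L m)) : Prop :=
  ∀ i : Fin m, ∀ r ∈ R, ∀ r' ∈ R, ∀ n n' : ℕ, locEq i r n r' n' → n = n'

/-- The system `R` has a unique initial state. -/
def UISSys {L : Type} {m : ℕ} (R : Set (GRun L m)) : Prop :=
  ∀ r ∈ R, ∀ r' ∈ R, r 0 = r' 0

/-- Omit consecutive repetitions from a list. -/
noncomputable def dedup {L : Type} : List L → List L
  | [] => []
  | [a] => [a]
  | a :: b :: l => if a = b then dedup (b :: l) else a :: dedup (b :: l)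

/-- Agent `i`'s local-state sequence at the point `(r,n)`: the sequence of local states
of agent `i` in `r 0, …, r n`, with consecutive repetitions omitted. -/
noncomputable def lsSeq {L : Type} {m : ℕ} (i : Fin m) (r : GRun L m) (n : ℕ) : List L :=
  dedup ((List.range (n + 1)).map fun k => (r k).2 i)

/-- Agent `i` has perfect recall in the system `R`. -/
def PerfectRecallSys {L : Type} {m : ℕ} (R : Set (GRun L m)) (i : Fin m) : Prop :=
  ∀ r ∈ R, ∀ r' ∈ R, ∀ n n' : ℕ, locEq i r n r' n' → lsSeq i r n = lsSeq i r' n'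

/-- `futureIdx i r n j` is the index (time) of the `j`-th entry of agent `i`'s
future local-state sequence at `(r,n)` (where consecutive repetitions are omitted),
if this sequence has a `j`-th entry. -/
noncomputable def futureIdx {L : Type} {m : ℕ} (i : Fin m) (r : GRun L m) (n : ℕ) :
    ℕ → Option ℕ
  | 0 => some n
  | j + 1 => (futureIdx i r n j).bind fun t =>
      if h : ∃ k, t < k ∧ (r k).2 i ≠ (r t).2 i then some (Nat.find h) else none

/-- Agent `i`'s future local-state sequence at `(r,n)`: the (possibly finite) sequence of
local states of agent `i` in `r n, r (n+1), …`, with consecutive repetitions omitted,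
represented as a function `ℕ → Option L`. -/
noncomputable def futureSeq {L : Type} {m : ℕ} (i : Fin m) (r : GRun L m) (n : ℕ)
    (j : ℕ) : Option L :=
  (futureIdx i r n j).map fun t => (r t).2 i

/-- Agent `i` does not learn in the system `R`. -/
def NoLearningSys {L : Type} {m : ℕ} (R : Set (GRun L m)) (i : Fin m) : Prop :=
  ∀ r ∈ R, ∀ r' ∈ R, ∀ n n' : ℕ, locEq i r n r' n' →
    ∀ j : ℕ, futureSeq i r n j = futureSeq i r' n' j


/-- Agent `i` does not learn′ in the system `R`: whenever `(r,n) ∼_i (r',n')`, for every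
`k ≥ n` there exists `k' ≥ n'` with `(r,k) ∼_i (r',k')`. -/
def NoLearning'Sys {L : Type} {m : ℕ} (R : Set (GRun L m)) (i : Fin m) : Prop :=
  ∀ r ∈ R, ∀ r' ∈ R, ∀ n n' : ℕ, locEq i r n r' n' →
    ∀ k : ℕ, n ≤ k → ∃ k' : ℕ, n' ≤ k' ∧ locEq i r k r' k'

section Aux

variable {L : Type} {m : ℕ}

theorem dedup_pair : ∀ (l : List L) (a b : L),
    dedup (l ++ [a, b]) = if b = a then dedup (l ++ [a]) else dedup (l ++ [a]) ++ [b]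
  | [], a, b => by
    by_cases h : b = a <;> by_cases h2 : a = b <;> simp_all [dedup]
  | [c], a, b => by
    by_cases h : b = a <;> by_cases h2 : a = b <;> by_cases h3 : c = a <;>
      simp_all [dedup]
  | c :: d :: l, a, b => by
    have ih := dedup_pair (d :: l) a b
    have e1 : (c :: d :: l) ++ [a, b] = c :: ((d :: l) ++ [a, b]) := by simp
    have e2 : (c :: d :: l) ++ [a] = c :: ((d :: l) ++ [a]) := by simp
    have e3 : (d :: l) ++ [a, b] = d :: (l ++ [a, b]) := by simp
    have e4 : (d :: l) ++ [a] = d :: (l ++ [a]) := by simp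
    rw [e1, e2, e3, e4]
    rw [dedup, dedup, ← e3, ← e4, ih]
    by_cases hcd : c = d <;> by_cases hba : b = a <;> simp [hcd, hba]

theorem lsSeq_succ (i : Fin m) (r : GRun L m) (n : ℕ) :
    lsSeq i r (n + 1) = if (r (n + 1)).2 i = (r n).2 i then lsSeq i r n
      else lsSeq i r n ++ [(r (n + 1)).2 i] := by
  unfold lsSeq
  have h2 : List.range (n + 2) = List.range n ++ [n, n + 1] := by
    rw [List.range_succ, List.range_succ, List.append_assoc]; rfl
  have h1 : List.range (n + 1) = List.range n ++ [n] := by rw [List.range_succ]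
  rw [h2, h1]
  simp only [List.map_append, List.map_cons, List.map_nil]
  rw [dedup_pair]

theorem lsSeq_prefix (i : Fin m) (r : GRun L m) {a b : ℕ} (h : a ≤ b) :
    lsSeq i r a <+: lsSeq i r b := by
  induction b, h using Nat.le_induction with
  | base => exact List.prefix_rfl
  | succ b hb ih =>
    rw [lsSeq_succ]
    split
    · exact ih
    · exact ih.trans (List.prefix_append _ _)

theorem lsSeq_change (i : Fin m) (r : GRun L m) {t k : ℕ} (htk : t < k)
    (hne : (r k).2 i ≠ (r t).2 i)
    (hconst : ∀ s, t < s → s < k → (r s).2 i = (r t).2 i) :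
    lsSeq i r k = lsSeq i r t ++ [(r k).2 i] := by
  have key : ∀ s, t ≤ s → s < k → lsSeq i r s = lsSeq i r t ∧ (r s).2 i = (r t).2 i := by
    intro s hs
    induction s, hs using Nat.le_induction with
    | base => exact fun _ => ⟨rfl, rfl⟩
    | succ s hs ih =>
      intro hsk
      have h1 := ih (by omega)
      have h2 : (r (s + 1)).2 i = (r t).2 i := hconst _ (by omega) hsk
      refine ⟨?_, h2⟩
      rw [lsSeq_succ, h2, h1.2, if_pos rfl]
      exact h1.1
  obtain ⟨s, rfl⟩ : ∃ s, k = s + 1 := ⟨k - 1, by omega⟩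
  have h1 := key s (by omega) (by omega)
  rw [lsSeq_succ, if_neg (by rw [h1.2]; exact hne), h1.1]

theorem futureIdx_ge (i : Fin m) (r : GRun L m) (n : ℕ) :
    ∀ j t, futureIdx i r n j = some t → n ≤ t := by
  intro j
  induction j with
  | zero => intro t h; simp [futureIdx] at h; omega
  | succ j ih =>
    intro t h
    simp only [futureIdx, Option.bind_eq_some_iff] at h
    obtain ⟨u, hu, hd⟩ := h
    split at hd
    · obtain ⟨hlt, -⟩ := Nat.find_spec ‹∃ k, u < k ∧ (r k).2 i ≠ (r u).2 i›
      have hut := ih u hu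
      simp only [Option.some.injEq] at hd
      omega
    · exact absurd hd (by simp)

theorem exists_futureIdx (i : Fin m) (r : GRun L m) (n k : ℕ) (hk : n ≤ k) :
    ∃ j t, futureIdx i r n j = some t ∧ t ≤ k ∧ (r k).2 i = (r t).2 i := by
  have key : ∀ k, n ≤ k → ∃ j t, futureIdx i r n j = some t ∧ t ≤ k ∧
      ∀ s, t ≤ s → s ≤ k → (r s).2 i = (r t).2 i := by
    intro k hk
    induction k, hk using Nat.le_induction with
    | base =>
      exact ⟨0, n, rfl, le_refl n, fun s h1 h2 => by
        have : s = n := by omega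
        rw [this]⟩
    | succ k hk ih =>
      obtain ⟨j, t, hjt, htk, hinv⟩ := ih
      by_cases hc : (r (k + 1)).2 i = (r t).2 i
      · refine ⟨j, t, hjt, by omega, fun s h1 h2 => ?_⟩
        rcases Nat.lt_or_ge s (k + 1) with h | h
        · exact hinv s h1 (by omega)
        · have : s = k + 1 := by omega
          rw [this]; exact hc
      · have h : ∃ k', t < k' ∧ (r k').2 i ≠ (r t).2 i := ⟨k + 1, by omega, hc⟩
        have hfind : Nat.find h = k + 1 := by
          have hle : Nat.find h ≤ k + 1 := Nat.find_min' h ⟨by omega, hc⟩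
          obtain ⟨hlt, hne⟩ := Nat.find_spec h
          by_contra hne'
          exact hne (hinv _ (by omega) (by omega))
        refine ⟨j + 1, k + 1, ?_, le_refl _, fun s h1 h2 => by
          have : s = k + 1 := by omega
          rw [this]⟩
        simp only [futureIdx, hjt, Option.bind_some]
        rw [dif_pos h, hfind]
  obtain ⟨j, t, hjt, htk, hinv⟩ := key k hk
  exact ⟨j, t, hjt, htk, hinv k htk (le_refl k)⟩

theorem futureIdx_congr (i : Fin m) {r r' : GRun L m} (n : ℕ)
    (h : ∀ k, n ≤ k → (r k).2 i = (r' k).2 i) :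
    ∀ j, futureIdx i r n j = futureIdx i r' n j := by
  intro j
  induction j with
  | zero => rfl
  | succ j ih =>
    simp only [futureIdx, ← ih]
    cases hj : futureIdx i r n j with
    | none => rfl
    | some t =>
      have ht : n ≤ t := futureIdx_ge i r n j t hj
      simp only [Option.bind_some]
      have hiff : ∀ k', (t < k' ∧ (r k').2 i ≠ (r t).2 i) ↔
          (t < k' ∧ (r' k').2 i ≠ (r' t).2 i) := by
        intro k'
        constructor <;> rintro ⟨hk', hne⟩ <;>
          exact ⟨hk', by rw [← h k' (by omega), ← h t ht] at *; exact hne⟩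
      by_cases hp : ∃ k', t < k' ∧ (r k').2 i ≠ (r t).2 i
      · have hp' : ∃ k', t < k' ∧ (r' k').2 i ≠ (r' t).2 i := by
          obtain ⟨k', hk'⟩ := hp; exact ⟨k', (hiff k').1 hk'⟩
        rw [dif_pos hp, dif_pos hp']
        congr 1
        apply le_antisymm
        · exact Nat.find_min' hp ((hiff _).2 (Nat.find_spec hp'))
        · exact Nat.find_min' hp' ((hiff _).1 (Nat.find_spec hp))
      · have hp' : ¬ ∃ k', t < k' ∧ (r' k').2 i ≠ (r' t).2 i := by
          intro hp'
          obtain ⟨k', hk'⟩ := hp'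
          exact hp ⟨k', (hiff k').2 hk'⟩
        rw [dif_neg hp, dif_neg hp']

theorem step_exists {R : Set (GRun L m)} {i : Fin m} (hNL' : NoLearning'Sys R i)
    {r r' : GRun L m} (hr : r ∈ R) (hr' : r' ∈ R) {t t' : ℕ}
    (hloc : locEq i r t r' t')
    (h : ∃ k, t < k ∧ (r k).2 i ≠ (r t).2 i) :
    ∃ k, t' < k ∧ (r' k).2 i ≠ (r' t').2 i := by
  obtain ⟨k, htk, hne⟩ := h
  obtain ⟨k', hk', hlock⟩ := hNL' r hr r' hr' t t' hloc k (by omega)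
  have hk'ne : (r' k').2 i ≠ (r' t').2 i := by
    unfold locEq at hlock hloc
    rw [← hlock, ← hloc]
    exact hne
  have : t' ≠ k' := fun e => hk'ne (by rw [← e])
  exact ⟨k', by omega, hk'ne⟩

theorem step_eq {R : Set (GRun L m)} {i : Fin m} (hPR : PerfectRecallSys R i)
    (hNL' : NoLearning'Sys R i)
    {r r' : GRun L m} (hr : r ∈ R) (hr' : r' ∈ R) {t t' : ℕ}
    (hloc : locEq i r t r' t')
    (h : ∃ k, t < k ∧ (r k).2 i ≠ (r t).2 i)
    (h' : ∃ k, t' < k ∧ (r' k).2 i ≠ (r' t').2 i) :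
    locEq i r (Nat.find h) r' (Nat.find h') := by
  obtain ⟨htk₀, hne₀⟩ := Nat.find_spec h
  obtain ⟨k', hk', hlock⟩ := hNL' r hr r' hr' t t' hloc (Nat.find h) (by omega)
  have hk'ne : (r' k').2 i ≠ (r' t').2 i := by
    unfold locEq at hlock hloc
    rw [← hlock, ← hloc]
    exact hne₀
  have ht'k' : t' < k' := by
    rcases Nat.lt_or_ge t' k' with hx | hx
    · exact hx
    · exact absurd (by rw [show k' = t' by omega]) hk'ne
  have hfind' : Nat.find h' ≤ k' := Nat.find_min' h' ⟨ht'k', hk'ne⟩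
  have hL2 : lsSeq i r (Nat.find h) = lsSeq i r t ++ [(r (Nat.find h)).2 i] :=
    lsSeq_change i r htk₀ hne₀ (fun s hs1 hs2 => by
      by_contra hc; exact (Nat.find_min h hs2) ⟨hs1, hc⟩)
  obtain ⟨htk₀', hne₀'⟩ := Nat.find_spec h'
  have hL2' : lsSeq i r' (Nat.find h') = lsSeq i r' t' ++ [(r' (Nat.find h')).2 i] :=
    lsSeq_change i r' htk₀' hne₀' (fun s hs1 hs2 => by
      by_contra hc; exact (Nat.find_min h' hs2) ⟨hs1, hc⟩)
  have hpr1 : lsSeq i r t = lsSeq i r' t' := hPR r hr r' hr' t t' hloc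
  have hpr2 : lsSeq i r (Nat.find h) = lsSeq i r' k' :=
    hPR r hr r' hr' (Nat.find h) k' hlock
  have hpre : lsSeq i r' (Nat.find h') <+: lsSeq i r' k' := lsSeq_prefix i r' hfind'
  rw [hL2', ← hpr2, hL2, hpr1] at hpre
  have heq := hpre.eq_of_length (by simp)
  have heq2 := List.append_cancel_left heq
  unfold locEq
  simpa using heq2.symm

end Aux

/-- **Lemma 7.1.** (a) No learning implies no learning′.  (b) If the system is
synchronous, or if agent `i` has perfect recall, then no learning and no learning′ are
equivalent. -/
theorem noLearning_vs_noLearning' {L : Type} {m : ℕ} (R : Set (GRun L m)) (i : Fin m) :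
    (NoLearningSys R i → NoLearning'Sys R i) ∧
    ((SyncSys R ∨ PerfectRecallSys R i) →
      (NoLearningSys R i ↔ NoLearning'Sys R i)) := by
  have parta : NoLearningSys R i → NoLearning'Sys R i := by
    intro hNL r hr r' hr' n n' hloc k hk
    obtain ⟨j, t, hjt, htk, hkt⟩ := exists_futureIdx i r n k hk
    have hfs := hNL r hr r' hr' n n' hloc j
    unfold futureSeq at hfs
    rw [hjt] at hfs
    cases ht' : futureIdx i r' n' j with
    | none => rw [ht'] at hfs; simp at hfs
    | some t' =>
      rw [ht'] at hfs
      simp only [Option.map_some, Option.some.injEq] at hfs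
      refine ⟨t', futureIdx_ge i r' n' j t' ht', ?_⟩
      unfold locEq
      rw [hkt, hfs]
  refine ⟨parta, ?_⟩
  rintro (hsync | hPR)
  · refine ⟨parta, ?_⟩
    intro hNL' r hr r' hr' n n' hloc j
    have hnn' : n = n' := hsync i r hr r' hr' n n' hloc
    subst hnn'
    have hagree : ∀ k, n ≤ k → (r k).2 i = (r' k).2 i := by
      intro k hk
      obtain ⟨k', hk', hlock⟩ := hNL' r hr r' hr' n n hloc k hk
      have he : k = k' := hsync i r hr r' hr' k k' hlock
      subst he
      exact hlock
    have hidx := futureIdx_congr i n hagree j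
    unfold futureSeq
    rw [← hidx]
    cases ht : futureIdx i r n j with
    | none => rfl
    | some t =>
      simp only [Option.map_some, Option.some.injEq]
      exact hagree t (futureIdx_ge i r n j t ht)
  · refine ⟨parta, ?_⟩
    intro hNL' r hr r' hr' n n' hloc j
    have key : ∀ j, (futureIdx i r n j = none ∧ futureIdx i r' n' j = none) ∨
        ∃ t t', futureIdx i r n j = some t ∧ futureIdx i r' n' j = some t' ∧
          locEq i r t r' t' := by
      intro j
      induction j with
      | zero => exact Or.inr ⟨n, n', rfl, rfl, hloc⟩
      | succ j ih =>
        rcases ih with ⟨h1, h2⟩ | ⟨t, t', ht, ht', hlt⟩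
        · left
          constructor <;> simp [futureIdx, h1, h2]
        · by_cases h : ∃ k, t < k ∧ (r k).2 i ≠ (r t).2 i
          · have h' := step_exists hNL' hr hr' hlt h
            right
            refine ⟨Nat.find h, Nat.find h', ?_, ?_, step_eq hPR hNL' hr hr' hlt h h'⟩
            · simp only [futureIdx, ht, Option.bind_some]
              rw [dif_pos h]
            · simp only [futureIdx, ht', Option.bind_some]
              rw [dif_pos h']
          · have hsymm : locEq i r' t' r t := hlt.symm
            have h' : ¬ ∃ k, t' < k ∧ (r' k).2 i ≠ (r' t').2 i := by
              intro h'
              exact h (step_exists hNL' hr' hr hsymm h')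
            left
            constructor
            · simp only [futureIdx, ht, Option.bind_some]
              rw [dif_neg h]
            · simp only [futureIdx, ht', Option.bind_some]
              rw [dif_neg h']
    rcases key j with ⟨h1, h2⟩ | ⟨t, t', ht, ht', hlt⟩
    · unfold futureSeq
      rw [h1, h2]
      rfl
    · unfold futureSeq
      rw [ht, ht']
      simpa [locEq] using hlt

end HalpernVardiMeyden
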